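/- Let X, Y, Z be independent nonnegative real random variables, exponentially distributed with means Ω̂_RF > 0, Ω̂_BF > 0, Ω_RB > 0 respectively. Let γ̄, A, G, C, D, Ω_ξ be positive real constants, define γ_F = A·X·γ̄/(γ̄(G·X + Ω_ξ + Z(C·Y + D)) + 1), let R_F > 0 and ψ_F = 2^{R_F} − 1, and define ε_F = P(γ_F ≤ ψ_F). If ψ_F < A/G then ε_F = 1 − χ₁(ψ_F)·exp(χ₃(ψ_F))·∫_{χ₂(ψ_F)}^∞ e^{−t}/t dt, where χ₁(u) = Ω̂_RF(A − uG)/(uΩ_RB Ω̂_BF C), χ₂(u) = χ₁(u)(uΩ_RB D/(Ω̂_RF(A − uG)) + 1), χ₃(u) = χ₂(u) − uΩ_ξ/(Ω̂_RF(A − uG)) − u/(Ω̂_RF γ̄(A − uG)); and if ψ_F ≥ A/G then ε_F = 1. -/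

import Mathlib

open MeasureTheory ProbabilityTheory Set
open scoped ENNReal NNReal

noncomputable def chi1 (ΩRF ΩBF ΩRB A G C : ℝ) (u : ℝ) : ℝ :=
  ΩRF * (A - u * G) / (u * ΩRB * ΩBF * C)

noncomputable def chi2 (ΩRF ΩBF ΩRB A G C D : ℝ) (u : ℝ) : ℝ :=
  chi1 ΩRF ΩBF ΩRB A G C u * (u * ΩRB * D / (ΩRF * (A - u * G)) + 1)

noncomputable def chi3 (ΩRF ΩBF ΩRB A G C D Ωξ snr : ℝ) (u : ℝ) : ℝ :=
  chi2 ΩRF ΩBF ΩRB A G C D u - u * Ωξ / (ΩRF * (A - u * G))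
    - u / (ΩRF * snr * (A - u * G))

section AuxLemmas

lemma expPDFReal_eq' (r x : ℝ) :
    exponentialPDFReal r x = if 0 ≤ x then r * Real.exp (-(r * x)) else 0 := by
  rw [exponentialPDFReal, gammaPDFReal]
  simp only [Real.rpow_one, Real.Gamma_one, div_one, sub_self, Real.rpow_zero, mul_one]

lemma integral_expMeasure' (r : ℝ) (hr : 0 < r) (h : ℝ → ℝ) :
    ∫ y, h y ∂(expMeasure r) = ∫ y in Ioi (0:ℝ), r * Real.exp (-(r * y)) * h y := by
  have hpdf : Measurable fun x => (exponentialPDFReal r x).toNNReal :=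
    (measurable_exponentialPDFReal r).real_toNNReal
  have hrepr : expMeasure r
      = volume.withDensity fun x => ((exponentialPDFReal r x).toNNReal : ℝ≥0∞) := rfl
  rw [hrepr, integral_withDensity_eq_integral_smul hpdf]
  have hfun : (fun a => ((exponentialPDFReal r a).toNNReal : ℝ≥0) • h a)
      = (Ici (0:ℝ)).indicator (fun a => r * Real.exp (-(r * a)) * h a) := by
    funext a
    by_cases ha : 0 ≤ a
    · rw [indicator_of_mem (mem_Ici.mpr ha), NNReal.smul_def,
        expPDFReal_eq', if_pos ha, Real.coe_toNNReal _ (by positivity), smul_eq_mul]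
    · rw [indicator_of_notMem (by simpa using ha), NNReal.smul_def,
        expPDFReal_eq', if_neg ha]
      simp
  rw [hfun, integral_indicator measurableSet_Ici, integral_Ici_eq_integral_Ioi]

lemma integral_exp_expMeasure' {r l : ℝ} (hr : 0 < r) (hl : 0 ≤ l) :
    ∫ z, Real.exp (-(l * z)) ∂(expMeasure r) = r / (r + l) := by
  rw [integral_expMeasure' r hr]
  have h1 : ∀ z : ℝ, r * Real.exp (-(r * z)) * Real.exp (-(l * z))
      = r * Real.exp (-((r + l) * z)) := by
    intro z; rw [mul_assoc, ← Real.exp_add]; ring_nf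
  simp_rw [h1]
  rw [MeasureTheory.integral_const_mul, integral_comp_mul_left_Ioi
    (fun t => Real.exp (-t)) 0 (by linarith : (0:ℝ) < r + l)]
  simp [integral_exp_neg_Ioi, integral_exp_Iic_zero, div_eq_mul_inv]

lemma scale_shift' (F : ℝ → ℝ) {r p : ℝ} (hr : 0 < r) :
    ∫ t in Ioi p, F t = r * ∫ y in Ioi (0:ℝ), F (r * y + p) := by
  have hemb : MeasurableEmbedding (fun x : ℝ => x + p) :=
    (Homeomorph.addRight p).isClosedEmbedding.measurableEmbedding
  have h1 : ∫ t in Ioi p, F t = ∫ x in Ioi (0:ℝ), F (x + p) := by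
    calc ∫ t in Ioi p, F t
        = ∫ t in Ioi p, F t ∂(Measure.map (· + p) volume) := by
          rw [Measure.IsAddRightInvariant.map_add_right_eq_self]
      _ = ∫ x in (· + p) ⁻¹' Ioi p, F (x + p) := hemb.setIntegral_map F (Ioi p)
      _ = ∫ x in Ioi (0:ℝ), F (x + p) := by
          congr 1
          ext x; simp [mem_preimage]
  have h2 := integral_comp_mul_left_Ioi (fun x => F (x + p)) 0 hr
  simp only [mul_zero, smul_eq_mul] at h2
  rw [h1, h2, ← mul_assoc, mul_inv_cancel₀ hr.ne', one_mul]

lemma map_eq_expMeasure' {Ω : Type*} [MeasureSpace Ω] [IsProbabilityMeasure (ℙ : Measure Ω)]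
    (W : Ω → ℝ) (hm : Measurable W) (h0 : ∀ ω, 0 ≤ W ω) {Θ : ℝ} (hΘ : 0 < Θ)
    (htail : ∀ x : ℝ, 0 ≤ x → (ℙ {ω | x < W ω}).toReal = Real.exp (-x / Θ)) :
    (ℙ : Measure Ω).map W = expMeasure Θ⁻¹ := by
  haveI := Measure.isProbabilityMeasure_map (μ := (ℙ : Measure Ω)) hm.aemeasurable
  have hrpos : 0 < Θ⁻¹ := by positivity
  refine Measure.ext_of_Iic ((ℙ : Measure Ω).map W) _ (fun a => ?_)
  rw [Measure.map_apply hm measurableSet_Iic]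
  have hRHS : expMeasure Θ⁻¹ (Iic a)
      = ENNReal.ofReal (if 0 ≤ a then 1 - Real.exp (-(Θ⁻¹ * a)) else 0) := by
    rw [show expMeasure Θ⁻¹ = volume.withDensity (exponentialPDF Θ⁻¹) from rfl,
      withDensity_apply _ measurableSet_Iic,
      lintegral_exponentialPDF_eq_antiDeriv hrpos a]
  rw [hRHS]
  by_cases ha : 0 ≤ a
  · rw [if_pos ha]
    have hpre : W ⁻¹' Iic a = {ω | a < W ω}ᶜ := by
      ext ω; simp [not_lt]
    have hWset : MeasurableSet {ω | a < W ω} := hm measurableSet_Ioi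
    rw [hpre, prob_compl_eq_one_sub hWset]
    have htr : (ℙ {ω | a < W ω}) = ENNReal.ofReal (Real.exp (-a / Θ)) := by
      rw [← htail a ha, ENNReal.ofReal_toReal (measure_ne_top _ _)]
    rw [htr, ← ENNReal.ofReal_one, ← ENNReal.ofReal_sub _ (Real.exp_pos _).le]
    congr 2
    rw [neg_div, div_eq_inv_mul]
  · rw [if_neg ha]
    have : W ⁻¹' Iic a = ∅ := by
      ext ω; simp only [mem_preimage, mem_Iic, mem_empty_iff_false, iff_false, not_le]
      exact lt_of_lt_of_le (not_le.mp ha) (h0 ω)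
    simp [this]

/-- the auxiliary threshold function -/
noncomputable def gA (ψ snr Ωξ C D A G : ℝ) (v : ℝ × ℝ) : ℝ :=
  ψ * (snr * (Ωξ + v.2 * (C * v.1 + D)) + 1) / (snr * (A - ψ * G))

end AuxLemmas

/-- Theorem 2 of the paper: the end-to-end average BLER at the far user
`ε_F = P(γ_F ≤ ψ_F)` with `ψ_F = 2^(R_F) - 1`. If `ψ_F < A/G` then
`ε_F = 1 + χ₁(ψ_F)·Ei(-χ₂(ψ_F))·exp(χ₃(ψ_F))` (with
`Ei(-x) = -∫_x^∞ e^(-t)/t dt`), and if `ψ_F ≥ A/G` then `ε_F = 1`. -/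
theorem e2e_bler_far_user
    {Ω : Type*} [MeasureSpace Ω] [IsProbabilityMeasure (ℙ : Measure Ω)]
    (X Y Z : Ω → ℝ) (hXm : Measurable X) (hYm : Measurable Y) (hZm : Measurable Z)
    (hX0 : ∀ ω, 0 ≤ X ω) (hY0 : ∀ ω, 0 ≤ Y ω) (hZ0 : ∀ ω, 0 ≤ Z ω)
    (ΩRF ΩBF ΩRB : ℝ) (hΩRF : 0 < ΩRF) (hΩBF : 0 < ΩBF) (hΩRB : 0 < ΩRB)
    (hXexp : ∀ x : ℝ, 0 ≤ x → (ℙ {ω | x < X ω}).toReal = Real.exp (-x / ΩRF))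
    (hYexp : ∀ y : ℝ, 0 ≤ y → (ℙ {ω | y < Y ω}).toReal = Real.exp (-y / ΩBF))
    (hZexp : ∀ z : ℝ, 0 ≤ z → (ℙ {ω | z < Z ω}).toReal = Real.exp (-z / ΩRB))
    (hindep : iIndepFun ![X, Y, Z] ℙ)
    (snr A G C D Ωξ : ℝ) (hsnr : 0 < snr) (hA : 0 < A) (hG : 0 < G)
    (hC : 0 < C) (hD : 0 < D) (hΩξ : 0 < Ωξ)
    (RF : ℝ) (hRF : 0 < RF)
    (ψF εF : ℝ) (hψF : ψF = (2 : ℝ) ^ RF - 1)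
    (hεF : εF = (ℙ {ω | A * X ω * snr /
        (snr * (G * X ω + Ωξ + Z ω * (C * Y ω + D)) + 1) ≤ ψF}).toReal) :
    (ψF < A / G →
      εF = 1 - chi1 ΩRF ΩBF ΩRB A G C ψF *
        Real.exp (chi3 ΩRF ΩBF ΩRB A G C D Ωξ snr ψF) *
        ∫ t in Ioi (chi2 ΩRF ΩBF ΩRB A G C D ψF), Real.exp (-t) / t) ∧
    (A / G ≤ ψF → εF = 1) := by
  have hψ0 : 0 < ψF := by
    rw [hψF]
    have h2 : (1:ℝ) < 2 ^ RF := by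
      rw [Real.one_lt_rpow_iff_of_pos (by norm_num)]
      exact Or.inl ⟨one_lt_two, hRF⟩
    linarith
  have hd : ∀ ω, 0 < snr * (G * X ω + Ωξ + Z ω * (C * Y ω + D)) + 1 := by
    intro ω
    have h01 : 0 ≤ G * X ω := mul_nonneg hG.le (hX0 ω)
    have h02 : 0 ≤ Z ω * (C * Y ω + D) :=
      mul_nonneg (hZ0 ω) (by nlinarith [mul_nonneg hC.le (hY0 ω)])
    nlinarith [mul_nonneg hsnr.le (by linarith : (0:ℝ) ≤ G * X ω + Ωξ + Z ω * (C * Y ω + D))]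
  constructor
  · -- main case
    intro hlt
    have hAG : 0 < A - ψF * G := by
      rw [lt_div_iff₀ hG] at hlt; linarith
    -- notation
    have hAGpos : 0 < snr * (A - ψF * G) := by positivity
    set k0 : ℝ := ψF * (snr * Ωξ + 1) / (snr * (A - ψF * G) * ΩRF) with hk0def
    set k1 : ℝ := ψF / ((A - ψF * G) * ΩRF) with hk1def
    have hk1pos : 0 < k1 := by rw [hk1def]; positivity
    -- laws
    have hYμ : (ℙ : Measure Ω).map Y = expMeasure ΩBF⁻¹ := map_eq_expMeasure' Y hYm hY0 hΩBF hYexp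
    have hZμ : (ℙ : Measure Ω).map Z = expMeasure ΩRB⁻¹ := map_eq_expMeasure' Z hZm hZ0 hΩRB hZexp
    haveI hPX : IsProbabilityMeasure ((ℙ : Measure Ω).map X) :=
      Measure.isProbabilityMeasure_map hXm.aemeasurable
    haveI hPY : IsProbabilityMeasure ((ℙ : Measure Ω).map Y) :=
      Measure.isProbabilityMeasure_map hYm.aemeasurable
    haveI hPZ : IsProbabilityMeasure ((ℙ : Measure Ω).map Z) :=
      Measure.isProbabilityMeasure_map hZm.aemeasurable
    haveI hPV : IsProbabilityMeasure ((ℙ : Measure Ω).map (fun ω => (Y ω, Z ω))) :=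
      Measure.isProbabilityMeasure_map (hYm.prodMk hZm).aemeasurable
    -- independence
    have hmeas3 : ∀ i : Fin 3, Measurable (![X, Y, Z] i) := by
      intro i; fin_cases i <;> simpa
    have hYZ : IndepFun Y Z ℙ := by
      have := hindep.indepFun (show (1 : Fin 3) ≠ 2 by decide)
      simpa using this
    have hVX : IndepFun (fun ω => (Y ω, Z ω)) X ℙ := by
      have := hindep.indepFun_prodMk hmeas3 1 2 0 (by decide) (by decide)
      simpa using this
    have hVmap : (ℙ : Measure Ω).map (fun ω => (Y ω, Z ω))
        = ((ℙ : Measure Ω).map Y).prod ((ℙ : Measure Ω).map Z) :=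
      (indepFun_iff_map_prod_eq_prod_map_map hYm.aemeasurable hZm.aemeasurable).mp hYZ
    have hJmap : (ℙ : Measure Ω).map (fun ω => ((Y ω, Z ω), X ω))
        = ((ℙ : Measure Ω).map (fun ω => (Y ω, Z ω))).prod ((ℙ : Measure Ω).map X) :=
      (indepFun_iff_map_prod_eq_prod_map_map (hYm.prodMk hZm).aemeasurable
        hXm.aemeasurable).mp hVX
    -- the event and its complement
    have hgm : Measurable (gA ψF snr Ωξ C D A G) := by
      unfold gA; fun_prop
    have hS : MeasurableSet {p : (ℝ × ℝ) × ℝ | gA ψF snr Ωξ C D A G p.1 < p.2} :=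
      measurableSet_lt (hgm.comp measurable_fst) measurable_snd
    have hcompl : {ω | A * X ω * snr /
          (snr * (G * X ω + Ωξ + Z ω * (C * Y ω + D)) + 1) ≤ ψF}ᶜ
        = (fun ω => ((Y ω, Z ω), X ω)) ⁻¹'
          {p : (ℝ × ℝ) × ℝ | gA ψF snr Ωξ C D A G p.1 < p.2} := by
      ext ω
      simp only [mem_compl_iff, mem_setOf_eq, mem_preimage, not_le, gA]
      rw [lt_div_iff₀ (hd ω), div_lt_iff₀ hAGpos]
      have key : A * X ω * snr - ψF * (snr * (G * X ω + Ωξ + Z ω * (C * Y ω + D)) + 1)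
          = X ω * (snr * (A - ψF * G)) - ψF * (snr * (Ωξ + Z ω * (C * Y ω + D)) + 1) := by
        ring
      constructor <;> intro h <;> linarith
    have hPmeas : MeasurableSet ((fun ω => ((Y ω, Z ω), X ω)) ⁻¹'
        {p : (ℝ × ℝ) × ℝ | gA ψF snr Ωξ C D A G p.1 < p.2}) :=
      ((hYm.prodMk hZm).prodMk hXm) hS
    have hEF1 : εF = 1 - (ℙ ((fun ω => ((Y ω, Z ω), X ω)) ⁻¹'
        {p : (ℝ × ℝ) × ℝ | gA ψF snr Ωξ C D A G p.1 < p.2})).toReal := by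
      rw [hεF, show {ω | A * X ω * snr /
          (snr * (G * X ω + Ωξ + Z ω * (C * Y ω + D)) + 1) ≤ ψF}
        = ((fun ω => ((Y ω, Z ω), X ω)) ⁻¹'
          {p : (ℝ × ℝ) × ℝ | gA ψF snr Ωξ C D A G p.1 < p.2})ᶜ from by
          rw [← hcompl, compl_compl]]
      rw [prob_compl_eq_one_sub hPmeas,
        ENNReal.toReal_sub_of_le prob_le_one ENNReal.one_ne_top, ENNReal.toReal_one]
    -- probability as iterated integral
    have htailX : ∀ t : ℝ, 0 ≤ t →
        ((ℙ : Measure Ω).map X) (Ioi t) = ENNReal.ofReal (Real.exp (-t / ΩRF)) := by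
      intro t ht
      rw [Measure.map_apply hXm measurableSet_Ioi,
        show X ⁻¹' Ioi t = {ω | t < X ω} from rfl, ← ENNReal.ofReal_toReal
        (measure_ne_top (ℙ : Measure Ω) _), hXexp t ht]
    have haeV : ∀ᵐ v ∂((ℙ : Measure Ω).map (fun ω => (Y ω, Z ω))),
        0 ≤ v.1 ∧ 0 ≤ v.2 := by
      have hset : MeasurableSet {v : ℝ × ℝ | 0 ≤ v.1 ∧ 0 ≤ v.2} :=
        (measurableSet_le measurable_const measurable_fst).inter
          (measurableSet_le measurable_const measurable_snd)
      exact (ae_map_iff (hYm.prodMk hZm).aemeasurable hset).mpr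
        (ae_of_all _ fun ω => ⟨hY0 ω, hZ0 ω⟩)
    have hgnn : ∀ v : ℝ × ℝ, 0 ≤ v.1 → 0 ≤ v.2 → 0 ≤ gA ψF snr Ωξ C D A G v := by
      intro v h1 h2
      unfold gA
      apply div_nonneg _ hAGpos.le
      have : 0 ≤ v.2 * (C * v.1 + D) := mul_nonneg h2 (by nlinarith [mul_nonneg hC.le h1])
      nlinarith [mul_nonneg hsnr.le (by linarith : (0:ℝ) ≤ Ωξ + v.2 * (C * v.1 + D))]
    have hPval : ℙ ((fun ω => ((Y ω, Z ω), X ω)) ⁻¹'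
          {p : (ℝ × ℝ) × ℝ | gA ψF snr Ωξ C D A G p.1 < p.2})
        = ∫⁻ v, ENNReal.ofReal (Real.exp (-(gA ψF snr Ωξ C D A G v) / ΩRF))
            ∂((ℙ : Measure Ω).map (fun ω => (Y ω, Z ω))) := by
      rw [← Measure.map_apply ((hYm.prodMk hZm).prodMk hXm) hS, hJmap,
        Measure.prod_apply hS]
      refine lintegral_congr_ae ?_
      filter_upwards [haeV] with v hv
      have : Prod.mk v ⁻¹' {p : (ℝ × ℝ) × ℝ | gA ψF snr Ωξ C D A G p.1 < p.2}
          = Ioi (gA ψF snr Ωξ C D A G v) := rfl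
      rw [this, htailX _ (hgnn v hv.1 hv.2)]
    have hfc : Continuous (fun v : ℝ × ℝ => Real.exp (-(gA ψF snr Ωξ C D A G v) / ΩRF)) := by
      unfold gA; fun_prop
    have htoReal : (∫⁻ v, ENNReal.ofReal (Real.exp (-(gA ψF snr Ωξ C D A G v) / ΩRF))
          ∂((ℙ : Measure Ω).map (fun ω => (Y ω, Z ω)))).toReal
        = ∫ v, Real.exp (-(gA ψF snr Ωξ C D A G v) / ΩRF)
            ∂((ℙ : Measure Ω).map (fun ω => (Y ω, Z ω))) :=
      (integral_eq_lintegral_of_nonneg_ae (ae_of_all _ fun v => (Real.exp_pos _).le)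
        hfc.aestronglyMeasurable).symm
    have hInt : Integrable (fun v : ℝ × ℝ => Real.exp (-(gA ψF snr Ωξ C D A G v) / ΩRF))
        ((ℙ : Measure Ω).map (fun ω => (Y ω, Z ω))) := by
      refine (integrable_const (1:ℝ)).mono' hfc.aestronglyMeasurable ?_
      filter_upwards [haeV] with v hv
      rw [Real.norm_eq_abs, abs_of_pos (Real.exp_pos _)]
      refine Real.exp_le_one_iff.mpr ?_
      have h1 := hgnn v hv.1 hv.2
      have h2 : 0 ≤ gA ψF snr Ωξ C D A G v / ΩRF := by positivity
      rw [neg_div]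
      linarith
    -- factorization of the integrand
    have hfact : ∀ y z : ℝ, Real.exp (-(gA ψF snr Ωξ C D A G (y, z)) / ΩRF)
        = Real.exp (-k0) * Real.exp (-(k1 * (C * y + D) * z)) := by
      intro y z
      rw [← Real.exp_add]
      congr 1
      rw [hk0def, hk1def]
      unfold gA
      field_simp
      ring
    -- the inner (Z) integral
    have haeY : ∀ᵐ y ∂((ℙ : Measure Ω).map Y), 0 ≤ y := by
      have hset : MeasurableSet {y : ℝ | 0 ≤ y} :=
        measurableSet_le measurable_const measurable_id
      exact (ae_map_iff hYm.aemeasurable hset).mpr (ae_of_all _ hY0)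
    have hstep : ∫ v, Real.exp (-(gA ψF snr Ωξ C D A G v) / ΩRF)
          ∂((ℙ : Measure Ω).map (fun ω => (Y ω, Z ω)))
        = ∫ y, Real.exp (-k0) * (ΩRB⁻¹ / (ΩRB⁻¹ + k1 * (C * y + D)))
            ∂((ℙ : Measure Ω).map Y) := by
      rw [hVmap, integral_prod _ (hVmap ▸ hInt)]
      refine integral_congr_ae ?_
      filter_upwards [haeY] with y hy
      simp_rw [hfact y]
      rw [MeasureTheory.integral_const_mul, hZμ, integral_exp_expMeasure'
        (by positivity) (by positivity : (0:ℝ) ≤ k1 * (C * y + D))]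
    have hstep2 : ∫ y, Real.exp (-k0) * (ΩRB⁻¹ / (ΩRB⁻¹ + k1 * (C * y + D)))
          ∂((ℙ : Measure Ω).map Y)
        = ∫ y in Ioi (0:ℝ), ΩBF⁻¹ * Real.exp (-(ΩBF⁻¹ * y)) *
            (Real.exp (-k0) * (ΩRB⁻¹ / (ΩRB⁻¹ + k1 * (C * y + D)))) := by
      rw [hYμ, integral_expMeasure' _ (by positivity)]
    -- LHS with the Ei integral
    have hchi1pos : 0 < chi1 ΩRF ΩBF ΩRB A G C ψF := by
      unfold chi1; positivity
    have hchi2pos : 0 < chi2 ΩRF ΩBF ΩRB A G C D ψF := by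
      unfold chi2; positivity
    have hEi : chi1 ΩRF ΩBF ΩRB A G C ψF * Real.exp (chi3 ΩRF ΩBF ΩRB A G C D Ωξ snr ψF) *
          ∫ t in Ioi (chi2 ΩRF ΩBF ΩRB A G C D ψF), Real.exp (-t) / t
        = ∫ y in Ioi (0:ℝ), ΩBF⁻¹ * Real.exp (-(ΩBF⁻¹ * y)) *
            (Real.exp (-k0) * (ΩRB⁻¹ / (ΩRB⁻¹ + k1 * (C * y + D)))) := by
      rw [scale_shift' (fun t => Real.exp (-t) / t)
        (by positivity : (0:ℝ) < ΩBF⁻¹) (p := chi2 ΩRF ΩBF ΩRB A G C D ψF),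
        ← MeasureTheory.integral_const_mul, ← MeasureTheory.integral_const_mul]
      refine setIntegral_congr_fun measurableSet_Ioi fun y hy => ?_
      have hy0 : (0:ℝ) < y := hy
      have hden1 : 0 < ΩBF⁻¹ * y + chi2 ΩRF ΩBF ΩRB A G C D ψF := by positivity
      have hden2 : 0 < ΩRB⁻¹ + k1 * (C * y + D) := by positivity
      have hexp : Real.exp (-(ΩBF⁻¹ * y + chi2 ΩRF ΩBF ΩRB A G C D ψF))
          = Real.exp (-(ΩBF⁻¹ * y)) * Real.exp (-(chi2 ΩRF ΩBF ΩRB A G C D ψF)) := by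
        rw [← Real.exp_add]; ring_nf
      have hchi3 : Real.exp (chi3 ΩRF ΩBF ΩRB A G C D Ωξ snr ψF) *
          Real.exp (-(chi2 ΩRF ΩBF ΩRB A G C D ψF)) = Real.exp (-k0) := by
        rw [← Real.exp_add]
        congr 1
        rw [hk0def]
        unfold chi3
        field_simp
        ring
      have hfrac : chi1 ΩRF ΩBF ΩRB A G C ψF / (ΩBF⁻¹ * y + chi2 ΩRF ΩBF ΩRB A G C D ψF)
          = ΩRB⁻¹ / (ΩRB⁻¹ + k1 * (C * y + D)) := by
        rw [div_eq_div_iff hden1.ne' hden2.ne', hk1def]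
        unfold chi2 chi1
        field_simp
        ring
      rw [← hchi3, ← hfrac, hexp]
      ring
    rw [hEF1, hPval, htoReal, hstep, hstep2, hEi]

  · -- degenerate case
    intro hle
    have hA' : A ≤ ψF * G := (div_le_iff₀ hG).mp hle
    have hall : {ω | A * X ω * snr /
        (snr * (G * X ω + Ωξ + Z ω * (C * Y ω + D)) + 1) ≤ ψF} = univ := by
      refine eq_univ_iff_forall.mpr fun ω => ?_
      rw [mem_setOf_eq, div_le_iff₀ (hd ω)]
      have h02 : 0 ≤ Z ω * (C * Y ω + D) :=
        mul_nonneg (hZ0 ω) (by nlinarith [mul_nonneg hC.le (hY0 ω)])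
      have key : ψF * (snr * (G * X ω + Ωξ + Z ω * (C * Y ω + D)) + 1) - A * X ω * snr
          = (ψF * G - A) * (snr * X ω) + ψF * (snr * Ωξ + snr * (Z ω * (C * Y ω + D)) + 1) := by
        ring
      have h1 : 0 ≤ (ψF * G - A) * (snr * X ω) :=
        mul_nonneg (by linarith) (mul_nonneg hsnr.le (hX0 ω))
      have h2 : 0 ≤ ψF * (snr * Ωξ + snr * (Z ω * (C * Y ω + D)) + 1) := by
        have : 0 ≤ snr * (Z ω * (C * Y ω + D)) := mul_nonneg hsnr.le h02
        nlinarith [mul_pos hsnr hΩξ]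
      linarith
    rw [hεF, hall, measure_univ, ENNReal.toReal_one]
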